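/- arXiv:2211.04866 — 2 statements merged into one kernel-verified Lean document; each statement's English description precedes it below -/
import Mathlib

section
/- Let R be a ring with a submultiplicative map |·| : R → [0,∞) with |1| ≤ 1 and |fg| ≤ |f|·|g|. For 0 < p < ∞ define |f|_p = inf over all finite decompositions f = f₁ + ... + f_n of (∑ᵢ |fᵢ|^p)^(1/p) (with the empty sum giving |0|_p = 0). Then |·|_p is submultiplicative: |fg|_p ≤ |f|_p · |g|_p for all f, g ∈ R. -/
/-- The `ℓ^p`-regularized norm: infimum over all finite decompositions
`f = f₁ + ⋯ + f_n` of `(∑ᵢ ν(fᵢ)^p)^(1/p)`. -/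
noncomputable def pNorm {R : Type*} [Ring R] (ν : R → ℝ) (p : ℝ) (f : R) : ℝ :=
  sInf {r : ℝ | ∃ l : List R, l.sum = f ∧ ((l.map fun x => ν x ^ p).sum) ^ (1 / p) = r}

/-! The decompositions `f = ∑ xᵢ` and `g = ∑ yⱼ` give the decomposition `fg = ∑ xᵢ yⱼ`, whose
`p`-th power sum is at most `(∑ ν(xᵢ)^p) (∑ ν(yⱼ)^p)` because `ν` is submultiplicative and
`t ↦ t^p` is monotone and multiplicative on `[0, ∞)`. Taking infima over both decompositions
gives the claim. -/

lemma le_mul_csInf_of_nonneg {a c : ℝ} {t : Set ℝ} (ha : 0 ≤ a) (ht : t.Nonempty)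
    (h : ∀ b ∈ t, c ≤ a * b) : c ≤ a * sInf t := by
  rw [← smul_eq_mul, ← Real.sInf_smul_of_nonneg ha]
  exact le_csInf ht.smul_set (by rintro _ ⟨b, hb, rfl⟩; exact h b hb)

lemma le_csInf_mul_csInf_of_nonneg {s t : Set ℝ} {c : ℝ} (hs : s.Nonempty) (ht : t.Nonempty)
    (hs₀ : ∀ a ∈ s, 0 ≤ a) (ht₀ : ∀ b ∈ t, 0 ≤ b) (h : ∀ a ∈ s, ∀ b ∈ t, c ≤ a * b) :
    c ≤ sInf s * sInf t := by
  rw [mul_comm]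
  refine le_mul_csInf_of_nonneg (Real.sInf_nonneg ht₀) hs fun a ha => ?_
  rw [mul_comm]
  exact le_mul_csInf_of_nonneg (hs₀ a ha) ht (h a ha)

lemma List.sum_flatMap_mul {α : Type*} [NonUnitalNonAssocSemiring α] (l₁ l₂ : List α) :
    (l₁.flatMap fun x => l₂.map (x * ·)).sum = l₁.sum * l₂.sum := by
  induction l₁ with
  | nil => simp
  | cons x l₁ ih =>
    rw [List.flatMap_cons, List.sum_append, ih, List.sum_cons, add_mul]
    exact congrArg (· + _) (by simpa using List.sum_map_mul_left l₂ id x)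

section PowerSum

variable {α : Type*} (ν : α → ℝ) (p : ℝ)

noncomputable def powerSum (l : List α) : ℝ :=
  (l.map fun x => ν x ^ p).sum

variable {ν p}

lemma powerSum_nonneg (hν : ∀ x, 0 ≤ ν x) (l : List α) : 0 ≤ powerSum ν p l :=
  List.sum_nonneg <| by
    simp only [List.mem_map]
    rintro _ ⟨x, -, rfl⟩
    exact Real.rpow_nonneg (hν x) p

lemma powerSum_flatMap_mul_le [Mul α] (hp : 0 ≤ p) (hν : ∀ x, 0 ≤ ν x)
    (hmul : ∀ x y, ν (x * y) ≤ ν x * ν y) (l₁ l₂ : List α) :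
    powerSum ν p (l₁.flatMap fun x => l₂.map (x * ·)) ≤ powerSum ν p l₁ * powerSum ν p l₂ := by
  induction l₁ with
  | nil => simp [powerSum]
  | cons x l₁ ih =>
    have hx : powerSum ν p (l₂.map (x * ·)) ≤ ν x ^ p * powerSum ν p l₂ := by
      rw [powerSum, List.map_map, powerSum, ← List.sum_map_mul_left]
      refine List.sum_le_sum fun y _ => ?_
      calc ν (x * y) ^ p ≤ (ν x * ν y) ^ p := Real.rpow_le_rpow (hν _) (hmul x y) hp
        _ = ν x ^ p * ν y ^ p := Real.mul_rpow (hν x) (hν y)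
    simp only [powerSum, List.flatMap_cons, List.map_append, List.sum_append, List.map_cons,
      List.sum_cons, add_mul] at ih hx ⊢
    exact add_le_add hx ih

end PowerSum

section PNorm

variable {R : Type*} [Ring R] {ν : R → ℝ} {p : ℝ}

lemma pNorm_le_powerSum_rpow (hν : ∀ x, 0 ≤ ν x) {f : R} {l : List R} (hl : l.sum = f) :
    pNorm ν p f ≤ powerSum ν p l ^ (1 / p) :=
  csInf_le ⟨0, by rintro _ ⟨l, -, rfl⟩; exact Real.rpow_nonneg (powerSum_nonneg hν l) _⟩
    ⟨l, hl, rfl⟩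

end PNorm

theorem stmt6_general {R : Type*} [Ring R] (ν : R → ℝ) (p : ℝ) (hp : 0 < p)
    (hnonneg : ∀ x, 0 ≤ ν x)
    (hmul : ∀ f g, ν (f * g) ≤ ν f * ν g) :
    ∀ f g : R, pNorm ν p (f * g) ≤ pNorm ν p f * pNorm ν p g := by
  have hrpow_nonneg (l : List R) : 0 ≤ powerSum ν p l ^ (1 / p) :=
    Real.rpow_nonneg (powerSum_nonneg hnonneg l) _
  intro f g
  refine le_csInf_mul_csInf_of_nonneg ⟨_, [f], by simp, rfl⟩ ⟨_, [g], by simp, rfl⟩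
    (by rintro _ ⟨l, -, rfl⟩; exact hrpow_nonneg l) (by rintro _ ⟨l, -, rfl⟩; exact hrpow_nonneg l)
    ?_
  rintro _ ⟨l₁, rfl, rfl⟩ _ ⟨l₂, rfl, rfl⟩
  calc pNorm ν p (l₁.sum * l₂.sum)
      ≤ powerSum ν p (l₁.flatMap fun x => l₂.map (x * ·)) ^ (1 / p) :=
        pNorm_le_powerSum_rpow hnonneg (List.sum_flatMap_mul l₁ l₂)
    _ ≤ (powerSum ν p l₁ * powerSum ν p l₂) ^ (1 / p) :=
        Real.rpow_le_rpow (powerSum_nonneg hnonneg _)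
          (powerSum_flatMap_mul_le hp.le hnonneg hmul l₁ l₂) (by positivity)
    _ = powerSum ν p l₁ ^ (1 / p) * powerSum ν p l₂ ^ (1 / p) :=
        Real.mul_rpow (powerSum_nonneg hnonneg _) (powerSum_nonneg hnonneg _)

theorem stmt6 {R : Type*} [Ring R] (ν : R → ℝ) (p : ℝ) (hp : 0 < p)
    (hnonneg : ∀ x, 0 ≤ ν x) (hone : ν 1 ≤ 1)
    (hmul : ∀ f g, ν (f * g) ≤ ν f * ν g) :
    ∀ f g : R, pNorm ν p (f * g) ≤ pNorm ν p f * pNorm ν p g :=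
  stmt6_general ν p hp hnonneg hmul
end

section
/- The completed tensor product of (ℤⁿ, ℓ^q-norm over (ℤ,|·|_∞)) with (ℤ_p, |·|_p) over (ℤ, |·|_∞) is isometrically isomorphic to (ℤ_pⁿ, ℓ^∞-norm): the projective-type tensor seminorm on ℤⁿ ⊗_ℤ ℤ_p ≅ ℤ_pⁿ equals the ℓ^∞-norm ‖(x₁,...,x_n)‖ = max_i |x_i|_p, for any q ∈ [1,∞). -/
open scoped BigOperators

/-- The ℓ^q norm on ℤⁿ (with the archimedean absolute value). -/
noncomputable def zLqNorm (q : ℝ) {n : ℕ} (m : Fin n → ℤ) : ℝ :=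
  (∑ j, |(m j : ℝ)| ^ q) ^ (1 / q)

/-- The projective-type tensor seminorm on `ℤⁿ ⊗_ℤ ℤ_p ≅ ℤ_pⁿ` (non-archimedean
constant-∞ case): infimum over presentations `x = ∑ᵢ mᵢ ⊗ fᵢ` of
`maxᵢ (‖mᵢ‖_q · |fᵢ|_p)`. -/
noncomputable def tensorSeminorm (p : ℕ) [Fact p.Prime] (q : ℝ) {n : ℕ}
    (x : Fin (n + 1) → ℤ_[p]) : ℝ :=
  sInf {r : ℝ | ∃ (k : ℕ) (m : Fin (k + 1) → Fin (n + 1) → ℤ)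
    (f : Fin (k + 1) → ℤ_[p]),
    (∀ j, x j = ∑ i, (m i j : ℤ_[p]) * f i) ∧
    r = Finset.univ.sup' Finset.univ_nonempty (fun i => zLqNorm q (m i) * ‖f i‖)}

/-!
The bound `max_j |x_j|_p ≤ tensorSeminorm` holds for every presentation `x = ∑ᵢ mᵢ ⊗ fᵢ`:
by the ultrametric inequality `|x_j|_p ≤ maxᵢ |mᵢⱼ|_p |fᵢ|_p`, and a nonzero integer `mᵢⱼ`
has `|mᵢⱼ|_p ≤ 1 ≤ ‖mᵢ‖_q`. The bound is attained by the presentation `x = ∑ⱼ eⱼ ⊗ x_j`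
along the standard basis, whose vectors have `ℓ^q` norm `1`.
-/

open Finset

lemma zLqNorm_nonneg (q : ℝ) {n : ℕ} (m : Fin n → ℤ) : 0 ≤ zLqNorm q m :=
  Real.rpow_nonneg (sum_nonneg fun _ _ => Real.rpow_nonneg (abs_nonneg _) q) _

lemma zLqNorm_single_one (q : ℝ) {n : ℕ} (i : Fin n) : zLqNorm q (Pi.single i 1) = 1 := by
  rcases eq_or_ne q 0 with rfl | hq
  · simp [zLqNorm]
  · have hsum : ∑ j, |((Pi.single i 1 : Fin n → ℤ) j : ℝ)| ^ q = 1 := by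
      rw [sum_eq_single i (fun j _ hj => by simp [hj, Real.zero_rpow hq]) (by simp)]
      simp
    rw [zLqNorm, hsum, Real.one_rpow]

lemma one_le_zLqNorm {q : ℝ} (hq : 0 ≤ q) {n : ℕ} {m : Fin n → ℤ} {j : Fin n} (hmj : m j ≠ 0) :
    1 ≤ zLqNorm q m := by
  have hentry : (1 : ℝ) ≤ |(m j : ℝ)| ^ q :=
    Real.one_le_rpow (by exact_mod_cast Int.one_le_abs hmj) hq
  have hsum : (1 : ℝ) ≤ ∑ j', |(m j' : ℝ)| ^ q :=
    hentry.trans <| single_le_sum (f := fun j' => |(m j' : ℝ)| ^ q)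
      (fun _ _ => Real.rpow_nonneg (abs_nonneg _) q) (mem_univ j)
  exact Real.one_le_rpow hsum (by positivity)

lemma norm_intCast_le_zLqNorm (p : ℕ) [Fact p.Prime] {q : ℝ} (hq : 0 ≤ q) {n : ℕ}
    (m : Fin n → ℤ) (j : Fin n) : ‖(m j : ℤ_[p])‖ ≤ zLqNorm q m := by
  rcases eq_or_ne (m j) 0 with hmj | hmj
  · simpa [hmj] using zLqNorm_nonneg q m
  · exact (PadicInt.norm_le_one _).trans (one_le_zLqNorm hq hmj)

lemma sup'_norm_le_of_eq_sum (p : ℕ) [Fact p.Prime] {q : ℝ} (hq : 0 ≤ q) {n k : ℕ}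
    {x : Fin (n + 1) → ℤ_[p]} {m : Fin (k + 1) → Fin (n + 1) → ℤ} {f : Fin (k + 1) → ℤ_[p]}
    (hx : ∀ j, x j = ∑ i, (m i j : ℤ_[p]) * f i) :
    univ.sup' univ_nonempty (fun j => ‖x j‖) ≤
      univ.sup' univ_nonempty (fun i => zLqNorm q (m i) * ‖f i‖) := by
  refine sup'_le _ _ fun j _ => ?_
  rw [hx j]
  refine (univ_nonempty.norm_sum_le_sup'_norm _).trans (sup'_mono_fun fun i _ => ?_)
  rw [norm_mul]
  exact mul_le_mul_of_nonneg_right (norm_intCast_le_zLqNorm p hq (m i) j) (norm_nonneg _)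

theorem stmt10 (p : ℕ) [Fact p.Prime] (q : ℝ) (hq : 1 ≤ q) (n : ℕ)
    (x : Fin (n + 1) → ℤ_[p]) :
    tensorSeminorm p q x = Finset.univ.sup' Finset.univ_nonempty (fun i => ‖x i‖) := by
  have hq0 : 0 ≤ q := by linarith
  refine IsLeast.csInf_eq ⟨⟨n, fun i => Pi.single i 1, x, fun j => ?_, ?_⟩, ?_⟩
  · simp [Pi.single_apply]
  · simp only [zLqNorm_single_one, one_mul]
  · rintro r ⟨k, m, f, hx, rfl⟩
    exact sup'_norm_le_of_eq_sum p hq0 hx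
end
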